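/- Let E be a finite-dimensional real inner product space, θ ∈ E, ρ > 0, and let M : E → ℝ be twice continuously differentiable with Hessian ∇²M Lipschitz continuous with constant L ≥ 0. Let ε* be a minimizer of ε ↦ M(θ + ε) over the closed ball {ε : ‖ε‖ ≤ ρ}, and define the Anchor Gap Γ(θ) = M(θ) − M(θ + ε*). Then Γ(θ) ≤ ρ‖∇M(θ)‖ − (1/2)⟨ε*, ∇²M(θ) ε*⟩ + (L/6)ρ³. -/

import Mathlib

/-!
Restrict `M` to the segment `φ s = M (θ + s • ε*)`. The Lipschitz Hessian gives
`φ'' s ≥ φ'' 0 - L ‖ε*‖³ s` for `s ≥ 0`, so the remainder of the cubic model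
`φ 0 + φ' 0 s + φ'' 0 s² / 2 - L ‖ε*‖³ s³ / 6` has vanishing value and slope at `0` and a
nonnegative second derivative, hence is nonnegative at `s = 1`. This is the second-order Taylor
lower bound for `M (θ + ε*)`; Cauchy–Schwarz on the gradient term and `‖ε*‖ ≤ ρ` finish.
-/

open RealInnerProductSpace Set

theorem le_of_hasDerivAt_nonneg_on_Ici {f f' : ℝ → ℝ} (hf : ∀ s, HasDerivAt f (f' s) s)
    (hf' : ∀ s, 0 ≤ s → 0 ≤ f' s) {t : ℝ} (ht : 0 ≤ t) : f 0 ≤ f t := by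
  refine monotoneOn_of_hasDerivWithinAt_nonneg (convex_Ici 0) (f' := f')
    (fun s _ => (hf s).continuousAt.continuousWithinAt) (fun s _ => (hf s).hasDerivWithinAt)
    (fun s hs => hf' s ?_) self_mem_Ici ht ht
  rw [interior_Ici] at hs
  exact le_of_lt hs

theorem taylor_two_lower_of_hasDerivAt {φ φ' φ'' : ℝ → ℝ} {K t : ℝ}
    (hφ : ∀ s, HasDerivAt φ (φ' s) s) (hφ' : ∀ s, HasDerivAt φ' (φ'' s) s)
    (hφ'' : ∀ s, 0 ≤ s → φ'' 0 - K * s ≤ φ'' s) (ht : 0 ≤ t) :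
    φ 0 + φ' 0 * t + φ'' 0 / 2 * t ^ 2 - K / 6 * t ^ 3 ≤ φ t := by
  have hψ' : ∀ s, HasDerivAt (fun s => φ' s - φ' 0 - φ'' 0 * s + K / 2 * s ^ 2)
      (φ'' s - φ'' 0 + K * s) s := fun s =>
    ((((hφ' s).sub_const _).fun_sub ((hasDerivAt_id' s).const_mul _)).fun_add
      ((hasDerivAt_pow 2 s).const_mul _)).congr_deriv (by push_cast; ring)
  have hψ : ∀ s, HasDerivAt (fun s => φ s - φ' 0 * s - φ'' 0 / 2 * s ^ 2 + K / 6 * s ^ 3)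
      (φ' s - φ' 0 - φ'' 0 * s + K / 2 * s ^ 2) s := fun s =>
    ((((hφ s).fun_sub ((hasDerivAt_id' s).const_mul _)).fun_sub
      ((hasDerivAt_pow 2 s).const_mul _)).fun_add
      ((hasDerivAt_pow 3 s).const_mul _)).congr_deriv (by push_cast; ring)
  have hψ'_nonneg : ∀ s, 0 ≤ s → 0 ≤ φ' s - φ' 0 - φ'' 0 * s + K / 2 * s ^ 2 := fun s hs => by
    simpa using le_of_hasDerivAt_nonneg_on_Ici hψ' (fun r hr => by linarith [hφ'' r hr]) hs
  have := le_of_hasDerivAt_nonneg_on_Ici hψ hψ'_nonneg ht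
  linarith

theorem ContDiff.differentiable_gradient {E : Type*} [NormedAddCommGroup E]
    [InnerProductSpace ℝ E] [CompleteSpace E] {f : E → ℝ} {n : WithTop ℕ∞}
    (hf : ContDiff ℝ n f) (hn : 2 ≤ n) : Differentiable ℝ (gradient f) :=
  ((InnerProductSpace.toDual ℝ E).symm.toContinuousLinearEquiv.contDiff.comp
    (hf.fderiv_right (m := 1) hn)).differentiable one_ne_zero

theorem taylor_two_lower_of_hessian_lipschitz {E : Type*} [NormedAddCommGroup E]
    [InnerProductSpace ℝ E] [CompleteSpace E] {M : E → ℝ} {L : ℝ}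
    (hM : Differentiable ℝ M) (hg : Differentiable ℝ (gradient M))
    (hLip : ∀ x y : E,
      ‖fderiv ℝ (gradient M) x - fderiv ℝ (gradient M) y‖ ≤ L * ‖x - y‖) (θ ε : E) :
    M θ + ⟪gradient M θ, ε⟫ + (1 / 2) * ⟪ε, fderiv ℝ (gradient M) θ ε⟫
      - (L / 6) * ‖ε‖ ^ 3 ≤ M (θ + ε) := by
  set H := fderiv ℝ (gradient M)
  have hline : ∀ s : ℝ, HasDerivAt (fun s : ℝ => θ + s • ε) ε s := fun s => by
    simpa using ((hasDerivAt_id s).smul_const ε).const_add θ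
  have hφ : ∀ s : ℝ, HasDerivAt (fun s : ℝ => M (θ + s • ε))
      ⟪ε, gradient M (θ + s • ε)⟫ s := fun s => by
    rw [real_inner_comm, inner_gradient_left]
    exact (hM _).hasFDerivAt.comp_hasDerivAt s (hline s)
  have hφ' : ∀ s : ℝ, HasDerivAt (fun s : ℝ => ⟪ε, gradient M (θ + s • ε)⟫)
      ⟪ε, H (θ + s • ε) ε⟫ s := fun s => by
    simpa using (hasDerivAt_const s ε).inner ℝ
      ((hg _).hasFDerivAt.comp_hasDerivAt s (hline s))
  have hH : ∀ s : ℝ, 0 ≤ s →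
      ⟪ε, H θ ε⟫ - L * ‖ε‖ ^ 3 * s ≤ ⟪ε, H (θ + s • ε) ε⟫ := by
    intro s hs
    have hdiff : |⟪ε, (H (θ + s • ε) - H θ) ε⟫| ≤ L * ‖ε‖ ^ 3 * s := calc
      _ ≤ ‖ε‖ * ‖(H (θ + s • ε) - H θ) ε‖ := abs_real_inner_le_norm _ _
      _ ≤ ‖ε‖ * ((L * ‖s • ε‖) * ‖ε‖) := by
        gcongr
        exact (ContinuousLinearMap.le_opNorm _ _).trans
          (by gcongr; simpa using hLip (θ + s • ε) θ)
      _ = L * ‖ε‖ ^ 3 * s := by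
        rw [norm_smul, Real.norm_of_nonneg hs]; ring
    rw [sub_apply, inner_sub_right] at hdiff
    linarith [(abs_le.mp hdiff).1]
  have := taylor_two_lower_of_hasDerivAt hφ hφ' (by simpa using hH) zero_le_one
  simp only [zero_smul, add_zero, one_smul, mul_one, one_pow] at this
  rw [real_inner_comm]
  linarith

theorem anchor_gap_le_sharpness_general
    {E : Type*} [NormedAddCommGroup E] [InnerProductSpace ℝ E]
    [FiniteDimensional ℝ E]
    (M : E → ℝ) (θ : E) (ρ : ℝ)
    (hM : ContDiff ℝ 2 M)
    (L : ℝ) (hL : 0 ≤ L)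
    (hLip : ∀ x y : E,
      ‖fderiv ℝ (gradient M) x - fderiv ℝ (gradient M) y‖ ≤ L * ‖x - y‖)
    (εstar : E) (hball : ‖εstar‖ ≤ ρ) :
    M θ - M (θ + εstar) ≤
      ρ * ‖gradient M θ‖
        - (1 / 2) * ⟪εstar, fderiv ℝ (gradient M) θ εstar⟫
        + (L / 6) * ρ ^ 3 := by
  have htaylor := taylor_two_lower_of_hessian_lipschitz (hM.differentiable two_ne_zero)
    (hM.differentiable_gradient le_rfl) hLip θ εstar
  have hgrad : -⟪gradient M θ, εstar⟫ ≤ ρ * ‖gradient M θ‖ := calc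
    _ ≤ ‖gradient M θ‖ * ‖εstar‖ := (neg_le_abs _).trans (abs_real_inner_le_norm _ _)
    _ ≤ ρ * ‖gradient M θ‖ := by rw [mul_comm]; gcongr
  have hcube : (L / 6) * ‖εstar‖ ^ 3 ≤ (L / 6) * ρ ^ 3 := by gcongr
  linarith

/-- **Anchor Gap as Local Sharpness (upper bound).**
If `M : E → ℝ` is twice continuously differentiable with Lipschitz Hessian
(constant `L ≥ 0`), and `ε*` minimizes `ε ↦ M (θ + ε)` over the closed ball of
radius `ρ`, then the Anchor Gap `Γ(θ) = M θ − M (θ + ε*)` satisfies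
`Γ(θ) ≤ ρ ‖∇M(θ)‖ − (1/2) ⟪ε*, ∇²M(θ) ε*⟫ + (L/6) ρ³`. -/
theorem anchor_gap_le_sharpness
    {E : Type*} [NormedAddCommGroup E] [InnerProductSpace ℝ E]
    [FiniteDimensional ℝ E]
    (M : E → ℝ) (θ : E) (ρ : ℝ) (hρ : 0 < ρ)
    (hM : ContDiff ℝ 2 M)
    (L : ℝ) (hL : 0 ≤ L)
    (hLip : ∀ x y : E,
      ‖fderiv ℝ (gradient M) x - fderiv ℝ (gradient M) y‖ ≤ L * ‖x - y‖)
    (εstar : E) (hball : ‖εstar‖ ≤ ρ)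
    (hmin : ∀ ε : E, ‖ε‖ ≤ ρ → M (θ + εstar) ≤ M (θ + ε)) :
    M θ - M (θ + εstar) ≤
      ρ * ‖gradient M θ‖
        - (1 / 2) * ⟪εstar, fderiv ℝ (gradient M) θ εstar⟫
        + (L / 6) * ρ ^ 3 :=
  anchor_gap_le_sharpness_general M θ ρ hM L hL hLip εstar hball
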